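/- Let d ≥ 2 and let Λ be a σ_d-invariant lamination (a closed family of pairwise unlinked chords containing all circle points, closed under σ_d-images, with preimages, and satisfying the sibling property). Then the subfamily of all non-isolated leaves of Λ is again a σ_d-invariant lamination; in particular, every non-isolated leaf ℓ of Λ has a σ_d-preimage in Λ that is also non-isolated. -/
import Mathlib


noncomputable section

/-- The circle `ℝ/ℤ`. -/
abbrev S1 := AddCircle (1 : ℝ)

/-- The `d`-tupling map `σ_d(t) = d·t` on the circle. -/
def sig (d : ℕ) (x : S1) : S1 := d • x

/-- `StrictArc a b c` : `b` lies strictly inside the positively oriented open arc from `a` to `c`. -/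
def StrictArc (a b c : S1) : Prop :=
  ∃ x y z : ℝ, (x : S1) = a ∧ (y : S1) = b ∧ (z : S1) = c ∧ x < y ∧ y < z ∧ z < x + 1

/-- Two chords (given by ordered pairs of endpoints) are linked (cross): their endpoints
alternate on the circle. -/
def Linked (p q : S1 × S1) : Prop :=
  (StrictArc p.1 q.1 p.2 ∧ StrictArc p.2 q.2 p.1) ∨ (StrictArc p.1 q.2 p.2 ∧ StrictArc p.2 q.1 p.1)

/-- Two chords are disjoint: they share no endpoint and are not linked. -/
def ChordDisj (p q : S1 × S1) : Prop :=
  p.1 ≠ q.1 ∧ p.1 ≠ q.2 ∧ p.2 ≠ q.1 ∧ p.2 ≠ q.2 ∧ ¬ Linked p q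

/-- The σ_d-image of a chord, as the (unordered) set of images of the endpoints. -/
def chordIm (d : ℕ) (p : S1 × S1) : Set S1 := {sig d p.1, sig d p.2}
/-- A full sibling collection: `d` pairwise disjoint chords with a common σ_d-image. -/
def SiblingCollection (d : ℕ) (f : Fin d → S1 × S1) : Prop :=
  (∀ i j, i ≠ j → ChordDisj (f i) (f j)) ∧ ∀ i j, chordIm d (f i) = chordIm d (f j)

/-- A family of chords has the sibling property: every non-critical chord of the family
is a member of a full sibling collection contained in the family. -/
def HasSiblings (d : ℕ) (W : Set (S1 × S1)) : Prop :=
  ∀ p ∈ W, sig d p.1 ≠ sig d p.2 →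
    ∃ f : Fin d → S1 × S1, (∀ i, f i ∈ W) ∧ (∃ i, f i = p) ∧ SiblingCollection d f

/-- A σ_d-invariant web: a family of chords with the sibling property, containing all
degenerate chords, closed under σ_d-images, and with every chord having a preimage chord. -/
def IsInvWeb (d : ℕ) (W : Set (S1 × S1)) : Prop :=
  HasSiblings d W ∧
  (∀ x : S1, (x, x) ∈ W) ∧
  (∀ p ∈ W, (sig d p.1, sig d p.2) ∈ W) ∧
  (∀ p ∈ W, ∃ q ∈ W, ({sig d q.1, sig d q.2} : Set S1) = {p.1, p.2})

/-- A σ_d-invariant lamination: a closed family of pairwise unlinked chords containing all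
degenerate chords, closed under σ_d-images, with preimages, and with the sibling property. -/
def IsInvLam (d : ℕ) (Λ : Set (S1 × S1)) : Prop :=
  IsClosed Λ ∧
  (∀ x : S1, (x, x) ∈ Λ) ∧
  (∀ p ∈ Λ, ∀ q ∈ Λ, ¬ Linked p q) ∧
  (∀ p ∈ Λ, (sig d p.1, sig d p.2) ∈ Λ) ∧
  (∀ p ∈ Λ, ∃ q ∈ Λ, ({sig d q.1, sig d q.2} : Set S1) = {p.1, p.2}) ∧
  HasSiblings d Λ

section Helpers

open Filter Topology

lemma sig_coe (d : ℕ) (t : ℝ) : sig d (t : S1) = ((d * t : ℝ) : S1) := by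
  show (d : ℕ) • ((t:ℝ) : S1) = _
  rw [← AddCircle.coe_nsmul, nsmul_eq_mul]

lemma sig_cont (d : ℕ) : Continuous (sig d) := by unfold sig; exact continuous_nsmul _

lemma coe_surj : Function.Surjective ((↑) : ℝ → S1) :=
  fun x => QuotientAddGroup.induction_on x (fun t => ⟨t, rfl⟩)

lemma coe_sub' (a b : ℝ) : ((a - b : ℝ) : S1) = (a : S1) - b :=
  QuotientAddGroup.mk_sub _ a b

lemma sig_surj {d : ℕ} (hd : 1 ≤ d) : Function.Surjective (sig d) := by
  intro x
  obtain ⟨t, rfl⟩ := coe_surj x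
  have hd0 : (d:ℝ) ≠ 0 := by
    have : (0:ℝ) < d := by exact_mod_cast Nat.lt_of_lt_of_le Nat.zero_lt_one hd
    exact ne_of_gt this
  exact ⟨((t / d : ℝ) : S1), by rw [sig_coe]; congr 1; field_simp⟩

lemma sig_sep {d : ℕ} (hd : 1 ≤ d) {x y : S1} (h : sig d x = sig d y) (hne : x ≠ y) :
    1 / (d : ℝ) ≤ dist x y := by
  have hd0 : (0:ℝ) < d := by exact_mod_cast Nat.lt_of_lt_of_le Nat.zero_lt_one hd
  obtain ⟨a, rfl⟩ := coe_surj x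
  obtain ⟨b, rfl⟩ := coe_surj y
  set s : ℝ := a - b with hs
  have hsne : ((s : ℝ) : S1) ≠ 0 := by
    rw [coe_sub', sub_ne_zero]; exact hne
  have hz : ((d * s : ℝ) : S1) = 0 := by
    have : ((d*a : ℝ) : S1) - ((d*b : ℝ) : S1) = 0 := by
      rw [← sig_coe, ← sig_coe, h, sub_self]
    rw [← coe_sub'] at this
    convert this using 2
    ring
  obtain ⟨n, hn⟩ := (AddCircle.coe_eq_zero_iff (1:ℝ)).mp hz
  simp only [zsmul_eq_mul, mul_one] at hn
  have hdist : dist ((a:ℝ):S1) ((b:ℝ):S1) = |s - round s| := by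
    rw [dist_eq_norm, ← coe_sub', ← hs]
    simpa using AddCircle.norm_eq (1:ℝ) (x := s)
  rw [hdist]
  set m : ℤ := round s with hm
  have hnm : (n : ℝ) - d * m ≠ 0 := by
    intro hzero
    have : s = (m : ℝ) := by
      have : (n:ℝ) = d * m := by linarith
      rw [this] at hn
      exact mul_left_cancel₀ (ne_of_gt hd0) hn.symm
    exact hsne (by rw [this, AddCircle.coe_eq_zero_iff]; exact ⟨m, by simp⟩)
  have hcast : ((n - d * m : ℤ) : ℝ) = (n:ℝ) - d * m := by push_cast; ring
  have hint : (1:ℝ) ≤ |(n:ℝ) - d * m| := by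
    rw [← hcast, ← Int.cast_abs]
    exact_mod_cast Int.one_le_abs (by exact_mod_cast fun hh => hnm (by rw [← hcast, hh]; simp))
  have hseq : s - m = ((n:ℝ) - d * m) / d := by
    field_simp
    linarith [hn]
  rw [hseq, abs_div, abs_of_pos hd0]
  gcongr

lemma sep_limit {d : ℕ} (hd : 1 ≤ d) {u v : ℕ → S1} {a b : S1}
    (hu : Tendsto u atTop (𝓝 a)) (hv : Tendsto v atTop (𝓝 b))
    (heq : ∀ n, sig d (u n) = sig d (v n)) (hne : ∀ n, u n ≠ v n) : a ≠ b := by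
  intro hab
  have hd0 : (0:ℝ) < d := by exact_mod_cast Nat.lt_of_lt_of_le Nat.zero_lt_one hd
  have h1 : Tendsto (fun n => dist (u n) (v n)) atTop (𝓝 (dist a b)) := hu.dist hv
  have h2 : 1 / (d:ℝ) ≤ dist a b := ge_of_tendsto' h1 (fun n => sig_sep hd (heq n) (hne n))
  rw [hab, dist_self] at h2
  have : (0:ℝ) < 1 / d := by positivity
  linarith

lemma mem_closure_inter_open {X : Type*} [TopologicalSpace X] {s U : Set X} {p : X}
    (hp : p ∈ closure s) (hU : IsOpen U) (hpU : p ∈ U) : p ∈ closure (s ∩ U) := by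
  rw [mem_closure_iff] at hp ⊢
  intro O hO hpO
  obtain ⟨q, ⟨hqO, hqU⟩, hqs⟩ := hp (O ∩ U) (hO.inter hU) ⟨hpO, hpU⟩
  exact ⟨q, hqO, hqs, hqU⟩

lemma exists_const_subseq {α : Type*} [Finite α] (f : ℕ → α) :
    ∃ c, ∃ φ : ℕ → ℕ, StrictMono φ ∧ ∀ n, f (φ n) = c := by
  obtain ⟨c, hc⟩ := Finite.exists_infinite_fiber f
  have hfr : ∃ᶠ n in atTop, f n = c := by
    rw [Nat.frequently_atTop_iff_infinite]
    have := Set.infinite_coe_iff.mp hc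
    simpa [Set.preimage, Set.mem_singleton_iff] using this
  obtain ⟨φ, hφ, h⟩ := Filter.extraction_of_frequently_atTop hfr
  exact ⟨c, φ, hφ, h⟩

lemma exists_tendsto_subseq {X : Type*} [TopologicalSpace X] [FirstCountableTopology X]
    [CompactSpace X] (u : ℕ → X) :
    ∃ x, ∃ φ : ℕ → ℕ, StrictMono φ ∧ Tendsto (u ∘ φ) atTop (𝓝 x) := by
  obtain ⟨x, -, φ, hφ, h⟩ := IsCompact.tendsto_subseq isCompact_univ (fun n => Set.mem_univ (u n))
  exact ⟨x, φ, hφ, h⟩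

end Helpers

/-- A leaf `p` of `Λ` is non-isolated if it is a limit of leaves of `Λ` other than `p`. -/
def NonIsolated (Λ : Set (S1 × S1)) (p : S1 × S1) : Prop :=
  p ∈ closure {q | q ∈ Λ ∧ q ≠ p ∧ q ≠ (p.2, p.1)}


section Mid

open Filter Topology

lemma key_nbhd {d : ℕ} (hd : 1 ≤ d) {p : S1 × S1} (hpc : sig d p.1 ≠ sig d p.2) :
    ∃ U : Set (S1 × S1), IsOpen U ∧ p ∈ U ∧ ∀ q ∈ U,
      ({sig d q.1, sig d q.2} : Set S1) = {sig d p.1, sig d p.2} → q = p := by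
  have hd0 : (0:ℝ) < d := by exact_mod_cast Nat.lt_of_lt_of_le Nat.zero_lt_one hd
  have hrr : (0:ℝ) < 1 / (2 * d) := by positivity
  set F1 : Set S1 := sig d ⁻¹' {sig d p.2} with hF1
  set F2 : Set S1 := sig d ⁻¹' {sig d p.1} with hF2
  have hF1c : IsClosed F1 := isClosed_singleton.preimage (sig_cont d)
  have hF2c : IsClosed F2 := isClosed_singleton.preimage (sig_cont d)
  refine ⟨(Metric.ball p.1 (1/(2*d)) ∩ F1ᶜ) ×ˢ (Metric.ball p.2 (1/(2*d)) ∩ F2ᶜ), ?_, ?_, ?_⟩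
  · exact (Metric.isOpen_ball.inter hF1c.isOpen_compl).prod
      (Metric.isOpen_ball.inter hF2c.isOpen_compl)
  · refine ⟨⟨Metric.mem_ball_self hrr, ?_⟩, ⟨Metric.mem_ball_self hrr, ?_⟩⟩
    · simp only [Set.mem_compl_iff, Set.mem_preimage, Set.mem_singleton_iff, hF1]
      exact hpc
    · simp only [Set.mem_compl_iff, Set.mem_preimage, Set.mem_singleton_iff, hF2]
      exact fun h => hpc h.symm
  · rintro q ⟨⟨hq1b, hq1F⟩, ⟨hq2b, hq2F⟩⟩ hset
    have hhalf : 1 / (2*(d:ℝ)) < 1 / d := by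
      apply one_div_lt_one_div_of_lt hd0
      linarith
    rcases Set.pair_eq_pair_iff.mp hset with ⟨h1, h2⟩ | ⟨h1, h2⟩
    · have e1 : q.1 = p.1 := by
        by_contra hne
        have := sig_sep hd h1 hne
        have hb := Metric.mem_ball.mp hq1b
        linarith
      have e2 : q.2 = p.2 := by
        by_contra hne
        have := sig_sep hd h2 hne
        have hb := Metric.mem_ball.mp hq2b
        linarith
      exact Prod.ext e1 e2
    · exact absurd (by simpa [hF1] using h1 : q.1 ∈ F1) hq1F

end Mid
section Mid2

open Filter Topology

lemma nonIsolated_seq_in {Λ : Set (S1 × S1)} {p : S1 × S1} (h : NonIsolated Λ p)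
    {U : Set (S1 × S1)} (hU : IsOpen U) (hpU : p ∈ U) :
    ∃ Q : ℕ → S1 × S1, Tendsto Q atTop (𝓝 p) ∧
      ∀ n, Q n ∈ Λ ∧ Q n ≠ p ∧ Q n ≠ (p.2, p.1) ∧ Q n ∈ U := by
  have h2 := mem_closure_inter_open h hU hpU
  obtain ⟨Q, hQ, hlim⟩ := mem_closure_iff_seq_limit.mp h2
  exact ⟨Q, hlim, fun n => ⟨(hQ n).1.1, (hQ n).1.2.1, (hQ n).1.2.2, (hQ n).2⟩⟩

lemma main_seq {d : ℕ} (hd : 1 ≤ d) {Λ : Set (S1 × S1)} {p : S1 × S1}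
    (hpc : sig d p.1 ≠ sig d p.2) (hpn : NonIsolated Λ p) :
    ∃ Q : ℕ → S1 × S1, Tendsto Q atTop (𝓝 p) ∧
      ∀ n, Q n ∈ Λ ∧ Q n ≠ p ∧ Q n ≠ (p.2, p.1) ∧ (Q n).1 ≠ (Q n).2 ∧
        sig d ((Q n).1) ≠ sig d ((Q n).2) ∧
        ({sig d ((Q n).1), sig d ((Q n).2)} : Set S1) ≠ {sig d p.1, sig d p.2} := by
  obtain ⟨U, hUo, hpU, hUkey⟩ := key_nbhd hd hpc
  have hVo : IsOpen (U ∩ {q : S1 × S1 | sig d q.1 ≠ sig d q.2}) :=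
    hUo.inter (isOpen_ne_fun ((sig_cont d).comp continuous_fst) ((sig_cont d).comp continuous_snd))
  have hpV : p ∈ U ∩ {q : S1 × S1 | sig d q.1 ≠ sig d q.2} := ⟨hpU, hpc⟩
  obtain ⟨Q, hlim, hQ⟩ := nonIsolated_seq_in hpn hVo hpV
  refine ⟨Q, hlim, fun n => ?_⟩
  obtain ⟨hmem, hne, hnr, hQU, hQnc⟩ :
      Q n ∈ Λ ∧ Q n ≠ p ∧ Q n ≠ (p.2, p.1) ∧ Q n ∈ U ∧ sig d ((Q n).1) ≠ sig d ((Q n).2) := by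
    obtain ⟨a, b, c, d'⟩ := hQ n
    exact ⟨a, b, c, d'.1, d'.2⟩
  exact ⟨hmem, hne, hnr, fun h => hQnc (by rw [h]), hQnc,
    fun hset => hne (hUkey _ hQU hset)⟩

lemma forward_nonisolated {d : ℕ} (hd : 1 ≤ d) {Λ : Set (S1 × S1)} (hΛ : IsInvLam d Λ)
    {p : S1 × S1} (hp : p ∈ Λ) (hpc : sig d p.1 ≠ sig d p.2) (hpn : NonIsolated Λ p) :
    NonIsolated Λ (sig d p.1, sig d p.2) := by
  obtain ⟨Q, hlim, hQ⟩ := main_seq hd hpc hpn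
  have hfwd := hΛ.2.2.2.1
  unfold NonIsolated
  refine mem_closure_of_tendsto (f := fun n => (sig d ((Q n).1), sig d ((Q n).2)))
      (b := (atTop : Filter ℕ)) ?_ ?_
  · exact (((sig_cont d).tendsto p.1).comp ((continuous_fst.tendsto p).comp hlim)).prodMk_nhds
      (((sig_cont d).tendsto p.2).comp ((continuous_snd.tendsto p).comp hlim))
  · filter_upwards with n
    obtain ⟨hmem, hne, hnr, hnd, hnc, hset⟩ := hQ n
    refine ⟨hfwd _ hmem, ?_, ?_⟩
    · intro h
      injection h with h1 h2
      exact hset (by rw [h1, h2])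
    · intro h
      injection h with h1 h2
      exact hset (by rw [h1, h2]; exact Set.pair_comm _ _)

lemma preimage_nonisolated {d : ℕ} (hd : 1 ≤ d) {Λ : Set (S1 × S1)} (hΛ : IsInvLam d Λ)
    {p : S1 × S1} (hp : p ∈ Λ) (hpd : p.1 ≠ p.2) (hpn : NonIsolated Λ p) :
    ∃ q ∈ Λ, NonIsolated Λ q ∧ ({sig d q.1, sig d q.2} : Set S1) = {p.1, p.2} := by
  classical
  obtain ⟨hcl, hdiag, hunlink, hfwd, hpre, hsib⟩ := hΛ
  have hVo : IsOpen {q : S1 × S1 | q.1 ≠ q.2} := isOpen_ne_fun continuous_fst continuous_snd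
  obtain ⟨Q, hlim, hQ⟩ := nonIsolated_seq_in hpn hVo hpd
  choose R hRmem hRim using fun n => hpre (Q n) (hQ n).1
  have hmatch : ∀ n, (sig d (R n).1 = (Q n).1 ∧ sig d (R n).2 = (Q n).2) ∨
      (sig d (R n).1 = (Q n).2 ∧ sig d (R n).2 = (Q n).1) :=
    fun n => Set.pair_eq_pair_iff.mp (hRim n)
  set pat : ℕ → Bool := fun n => decide (sig d (R n).1 = (Q n).1) with hpatdef
  obtain ⟨c, ψ, hψ, hcψ⟩ := exists_const_subseq pat
  obtain ⟨r, φ, hφ, hrlim0⟩ := exists_tendsto_subseq (R ∘ ψ)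
  have hthmono : StrictMono (ψ ∘ φ) := hψ.comp hφ
  have hrlim' : Tendsto (fun n => R ((ψ ∘ φ) n)) atTop (𝓝 r) := hrlim0
  have hQlim' : Tendsto (fun n => Q ((ψ ∘ φ) n)) atTop (𝓝 p) := hlim.comp hthmono.tendsto_atTop
  have hl1 : Tendsto (fun n => (R ((ψ ∘ φ) n)).1) atTop (𝓝 r.1) := (continuous_fst.tendsto r).comp hrlim'
  have hl2 : Tendsto (fun n => (R ((ψ ∘ φ) n)).2) atTop (𝓝 r.2) := (continuous_snd.tendsto r).comp hrlim'
  have hql1 : Tendsto (fun n => (Q ((ψ ∘ φ) n)).1) atTop (𝓝 p.1) := (continuous_fst.tendsto p).comp hQlim'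
  have hql2 : Tendsto (fun n => (Q ((ψ ∘ φ) n)).2) atTop (𝓝 p.2) := (continuous_snd.tendsto p).comp hQlim'
  have hrΛ : r ∈ Λ := hcl.mem_of_tendsto hrlim' (Filter.Eventually.of_forall fun n => hRmem _)
  have hσ1 : Tendsto (fun n => sig d ((R ((ψ ∘ φ) n)).1)) atTop (𝓝 (sig d r.1)) :=
    ((sig_cont d).tendsto r.1).comp hl1
  have hσ2 : Tendsto (fun n => sig d ((R ((ψ ∘ φ) n)).2)) atTop (𝓝 (sig d r.2)) :=
    ((sig_cont d).tendsto r.2).comp hl2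
  have hnd : ∀ n, (Q ((ψ ∘ φ) n)).1 ≠ (Q ((ψ ∘ φ) n)).2 := fun n => (hQ ((ψ ∘ φ) n)).2.2.2
  have hkey : (∀ n, sig d (R ((ψ ∘ φ) n)).1 = (Q ((ψ ∘ φ) n)).1 ∧ sig d (R ((ψ ∘ φ) n)).2 = (Q ((ψ ∘ φ) n)).2) ∨
      (∀ n, sig d (R ((ψ ∘ φ) n)).1 = (Q ((ψ ∘ φ) n)).2 ∧ sig d (R ((ψ ∘ φ) n)).2 = (Q ((ψ ∘ φ) n)).1) := by
    cases hc : c with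
    | false =>
      right
      intro n
      have hpatn : pat ((ψ ∘ φ) n) = false := by
        have := hcψ (φ n); rw [hc] at this; exact this
      have hne1 : sig d (R ((ψ ∘ φ) n)).1 ≠ (Q ((ψ ∘ φ) n)).1 := by
        simpa [hpatdef] using hpatn
      rcases hmatch ((ψ ∘ φ) n) with ⟨h1, _⟩ | h
      · exact absurd h1 hne1
      · exact h
    | true =>
      left
      intro n
      have hpatn : pat ((ψ ∘ φ) n) = true := by
        have := hcψ (φ n); rw [hc] at this; exact this
      have h1 : sig d (R ((ψ ∘ φ) n)).1 = (Q ((ψ ∘ φ) n)).1 := by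
        simpa [hpatdef] using hpatn
      rcases hmatch ((ψ ∘ φ) n) with h | ⟨h1', h2'⟩
      · exact h
      · exact absurd (h1.symm.trans h1') (hnd n)
  have hset : ({sig d r.1, sig d r.2} : Set S1) = {p.1, p.2} := by
    rcases hkey with hk | hk
    · have e1 : sig d r.1 = p.1 := tendsto_nhds_unique hσ1 (hql1.congr fun n => ((hk n).1).symm)
      have e2 : sig d r.2 = p.2 := tendsto_nhds_unique hσ2 (hql2.congr fun n => ((hk n).2).symm)
      rw [e1, e2]
    · have e1 : sig d r.1 = p.2 := tendsto_nhds_unique hσ1 (hql2.congr fun n => ((hk n).1).symm)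
      have e2 : sig d r.2 = p.1 := tendsto_nhds_unique hσ2 (hql1.congr fun n => ((hk n).2).symm)
      rw [e1, e2, Set.pair_comm]
  have hRr : ∀ n, R ((ψ ∘ φ) n) ≠ r ∧ R ((ψ ∘ φ) n) ≠ (r.2, r.1) := by
    intro n
    constructor
    · intro he
      have h2 : ({(Q ((ψ ∘ φ) n)).1, (Q ((ψ ∘ φ) n)).2} : Set S1) = {p.1, p.2} := by
        rw [← hRim ((ψ ∘ φ) n), he]
        exact hset
      rcases Set.pair_eq_pair_iff.mp h2 with ⟨a, b⟩ | ⟨a, b⟩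
      · exact (hQ ((ψ ∘ φ) n)).2.1 (Prod.ext a b)
      · exact (hQ ((ψ ∘ φ) n)).2.2.1 (Prod.ext a b)
    · intro he
      have h2 : ({(Q ((ψ ∘ φ) n)).1, (Q ((ψ ∘ φ) n)).2} : Set S1) = {p.1, p.2} := by
        rw [← hRim ((ψ ∘ φ) n), he]
        show ({sig d r.2, sig d r.1} : Set S1) = _
        rw [Set.pair_comm, hset]
      rcases Set.pair_eq_pair_iff.mp h2 with ⟨a, b⟩ | ⟨a, b⟩
      · exact (hQ ((ψ ∘ φ) n)).2.1 (Prod.ext a b)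
      · exact (hQ ((ψ ∘ φ) n)).2.2.1 (Prod.ext a b)
  refine ⟨r, hrΛ, ?_, hset⟩
  exact mem_closure_of_tendsto hrlim' (Filter.Eventually.of_forall fun n =>
    ⟨hRmem _, (hRr n).1, (hRr n).2⟩)

end Mid2

section Sib

open Filter Topology

lemma sibling_comp_equiv {d : ℕ} {f : Fin d → S1 × S1} (h : SiblingCollection d f)
    (e : Equiv.Perm (Fin d)) : SiblingCollection d (f ∘ e) :=
  ⟨fun i j hij => h.1 _ _ (fun hh => hij (e.injective hh)), fun i j => h.2 _ _⟩

lemma siblings_nonisolated {d : ℕ} (hd2 : 2 ≤ d) {Λ : Set (S1 × S1)} (hΛ : IsInvLam d Λ)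
    {p : S1 × S1} (hp : p ∈ Λ) (hpc : sig d p.1 ≠ sig d p.2) (hpn : NonIsolated Λ p) :
    ∃ f : Fin d → S1 × S1, (∀ i, f i ∈ Λ ∧ NonIsolated Λ (f i)) ∧ (∃ i, f i = p) ∧
      SiblingCollection d f := by
  classical
  have hd : 1 ≤ d := le_trans (by norm_num) hd2
  obtain ⟨hcl, hdiag, hunlink, hfwd, hpre, hsib⟩ := hΛ
  obtain ⟨Q, hlim, hQ⟩ := main_seq hd hpc hpn
  choose F hFmem hFeq hFsib using fun n => hsib (Q n) (hQ n).1 (hQ n).2.2.2.2.1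
  choose I hI using hFeq
  set z : Fin d := ⟨0, by omega⟩ with hz
  set G : ℕ → Fin d → S1 × S1 := fun n => F n ∘ Equiv.swap z (I n) with hG
  have hGz : ∀ n, G n z = Q n := by
    intro n
    show F n (Equiv.swap z (I n) z) = Q n
    rw [Equiv.swap_apply_left]
    exact hI n
  have hGmem : ∀ n i, G n i ∈ Λ := fun n i => hFmem n _
  have hGsib : ∀ n, SiblingCollection d (G n) := fun n => sibling_comp_equiv (hFsib n) _
  have hGim : ∀ n i, ({sig d ((G n i).1), sig d ((G n i).2)} : Set S1)
      = {sig d ((Q n).1), sig d ((Q n).2)} := by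
    intro n i
    have h2 := (hGsib n).2 i z
    rw [hGz] at h2
    simpa [chordIm] using h2
  set pat : ℕ → Fin d → Bool := fun n i => decide (sig d ((G n i).1) = sig d ((Q n).1)) with hpat
  obtain ⟨c, ψ, hψ, hcψ⟩ := exists_const_subseq pat
  obtain ⟨g, φ, hφ, hglim0⟩ := exists_tendsto_subseq (fun n => G (ψ n))
  have hmono : StrictMono (ψ ∘ φ) := hψ.comp hφ
  have hglim : ∀ i, Tendsto (fun n => G ((ψ ∘ φ) n) i) atTop (𝓝 (g i)) :=
    fun i => (tendsto_pi_nhds.mp hglim0) i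
  have hQlim : Tendsto (fun n => Q ((ψ ∘ φ) n)) atTop (𝓝 p) := hlim.comp hmono.tendsto_atTop
  have hql1 : Tendsto (fun n => (Q ((ψ ∘ φ) n)).1) atTop (𝓝 p.1) :=
    (continuous_fst.tendsto p).comp hQlim
  have hql2 : Tendsto (fun n => (Q ((ψ ∘ φ) n)).2) atTop (𝓝 p.2) :=
    (continuous_snd.tendsto p).comp hQlim
  have hσq1 : Tendsto (fun n => sig d ((Q ((ψ ∘ φ) n)).1)) atTop (𝓝 (sig d p.1)) :=
    ((sig_cont d).tendsto p.1).comp hql1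
  have hσq2 : Tendsto (fun n => sig d ((Q ((ψ ∘ φ) n)).2)) atTop (𝓝 (sig d p.2)) :=
    ((sig_cont d).tendsto p.2).comp hql2
  have hl1 : ∀ i, Tendsto (fun n => (G ((ψ ∘ φ) n) i).1) atTop (𝓝 ((g i).1)) :=
    fun i => (continuous_fst.tendsto (g i)).comp (hglim i)
  have hl2 : ∀ i, Tendsto (fun n => (G ((ψ ∘ φ) n) i).2) atTop (𝓝 ((g i).2)) :=
    fun i => (continuous_snd.tendsto (g i)).comp (hglim i)
  have hσ1 : ∀ i, Tendsto (fun n => sig d ((G ((ψ ∘ φ) n) i).1)) atTop (𝓝 (sig d ((g i).1))) :=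
    fun i => ((sig_cont d).tendsto _).comp (hl1 i)
  have hσ2 : ∀ i, Tendsto (fun n => sig d ((G ((ψ ∘ φ) n) i).2)) atTop (𝓝 (sig d ((g i).2))) :=
    fun i => ((sig_cont d).tendsto _).comp (hl2 i)
  have hmatch : ∀ n i, (sig d ((G n i).1) = sig d ((Q n).1) ∧ sig d ((G n i).2) = sig d ((Q n).2))
      ∨ (sig d ((G n i).1) = sig d ((Q n).2) ∧ sig d ((G n i).2) = sig d ((Q n).1)) :=
    fun n i => Set.pair_eq_pair_iff.mp (hGim n i)
  have hpatT : ∀ n i, c i = true → sig d ((G ((ψ ∘ φ) n) i).1) = sig d ((Q ((ψ ∘ φ) n)).1) ∧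
      sig d ((G ((ψ ∘ φ) n) i).2) = sig d ((Q ((ψ ∘ φ) n)).2) := by
    intro n i hci
    have hp1 : pat ((ψ ∘ φ) n) i = c i := congrFun (hcψ (φ n)) i
    rw [hci] at hp1
    have h1 : sig d ((G ((ψ ∘ φ) n) i).1) = sig d ((Q ((ψ ∘ φ) n)).1) := by
      simpa [hpat] using hp1
    rcases hmatch ((ψ ∘ φ) n) i with h | ⟨h1', _⟩
    · exact h
    · exact absurd (h1.symm.trans h1') (hQ ((ψ ∘ φ) n)).2.2.2.2.1
  have hpatF : ∀ n i, c i = false → sig d ((G ((ψ ∘ φ) n) i).1) = sig d ((Q ((ψ ∘ φ) n)).2) ∧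
      sig d ((G ((ψ ∘ φ) n) i).2) = sig d ((Q ((ψ ∘ φ) n)).1) := by
    intro n i hci
    have hp1 : pat ((ψ ∘ φ) n) i = c i := congrFun (hcψ (φ n)) i
    rw [hci] at hp1
    have h1 : sig d ((G ((ψ ∘ φ) n) i).1) ≠ sig d ((Q ((ψ ∘ φ) n)).1) := by
      simpa [hpat] using hp1
    rcases hmatch ((ψ ∘ φ) n) i with ⟨h1', _⟩ | h
    · exact absurd h1' h1
    · exact h
  have hgT1 : ∀ i, c i = true → sig d ((g i).1) = sig d p.1 := fun i hci =>
    tendsto_nhds_unique (hσ1 i) (hσq1.congr fun n => ((hpatT n i hci).1).symm)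
  have hgT2 : ∀ i, c i = true → sig d ((g i).2) = sig d p.2 := fun i hci =>
    tendsto_nhds_unique (hσ2 i) (hσq2.congr fun n => ((hpatT n i hci).2).symm)
  have hgF1 : ∀ i, c i = false → sig d ((g i).1) = sig d p.2 := fun i hci =>
    tendsto_nhds_unique (hσ1 i) (hσq2.congr fun n => ((hpatF n i hci).1).symm)
  have hgF2 : ∀ i, c i = false → sig d ((g i).2) = sig d p.1 := fun i hci =>
    tendsto_nhds_unique (hσ2 i) (hσq1.congr fun n => ((hpatF n i hci).2).symm)
  have hgset : ∀ i, ({sig d ((g i).1), sig d ((g i).2)} : Set S1) = {sig d p.1, sig d p.2} := by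
    intro i
    cases hci : c i
    · rw [hgF1 i hci, hgF2 i hci, Set.pair_comm]
    · rw [hgT1 i hci, hgT2 i hci]
  have hgmem : ∀ i, g i ∈ Λ :=
    fun i => hcl.mem_of_tendsto (hglim i) (Filter.Eventually.of_forall fun n => hGmem _ _)
  have hgz : g z = p := tendsto_nhds_unique (hglim z) (hQlim.congr fun n => (hGz _).symm)
  have hgni : ∀ i, NonIsolated Λ (g i) := by
    intro i
    have hne : ∀ n, G ((ψ ∘ φ) n) i ≠ g i ∧ G ((ψ ∘ φ) n) i ≠ ((g i).2, (g i).1) := by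
      intro n
      have hQset := (hQ ((ψ ∘ φ) n)).2.2.2.2.2
      constructor
      · intro he
        exact hQset ((hGim _ i).symm.trans (by rw [he]; exact hgset i))
      · intro he
        refine hQset ((hGim _ i).symm.trans ?_)
        rw [he]
        show ({sig d ((g i).2), sig d ((g i).1)} : Set S1) = _
        rw [Set.pair_comm]
        exact hgset i
    unfold NonIsolated
    exact mem_closure_of_tendsto (hglim i)
      (Filter.Eventually.of_forall fun n => ⟨hGmem _ _, (hne n).1, (hne n).2⟩)
  have hdisj : ∀ i j, i ≠ j → ChordDisj (g i) (g j) := by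
    intro i j hij
    have hGd : ∀ n, ChordDisj (G ((ψ ∘ φ) n) i) (G ((ψ ∘ φ) n) j) := fun n => (hGsib _).1 i j hij
    have h11 : (g i).1 ≠ (g j).1 := by
      cases hci : c i <;> cases hcj : c j
      · exact sep_limit hd (hl1 i) (hl1 j)
          (fun n => ((hpatF n i hci).1).trans ((hpatF n j hcj).1).symm) (fun n => (hGd n).1)
      · intro he; apply hpc; rw [← hgT1 j hcj, ← he, hgF1 i hci]
      · intro he; apply hpc; rw [← hgT1 i hci, he, hgF1 j hcj]
      · exact sep_limit hd (hl1 i) (hl1 j)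
          (fun n => ((hpatT n i hci).1).trans ((hpatT n j hcj).1).symm) (fun n => (hGd n).1)
    have h12 : (g i).1 ≠ (g j).2 := by
      cases hci : c i <;> cases hcj : c j
      · intro he; apply hpc; rw [← hgF2 j hcj, ← he, hgF1 i hci]
      · exact sep_limit hd (hl1 i) (hl2 j)
          (fun n => ((hpatF n i hci).1).trans ((hpatT n j hcj).2).symm) (fun n => (hGd n).2.1)
      · exact sep_limit hd (hl1 i) (hl2 j)
          (fun n => ((hpatT n i hci).1).trans ((hpatF n j hcj).2).symm) (fun n => (hGd n).2.1)
      · intro he; apply hpc; rw [← hgT1 i hci, he, hgT2 j hcj]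
    have h21 : (g i).2 ≠ (g j).1 := by
      cases hci : c i <;> cases hcj : c j
      · intro he; apply hpc; rw [← hgF2 i hci, he, hgF1 j hcj]
      · exact sep_limit hd (hl2 i) (hl1 j)
          (fun n => ((hpatF n i hci).2).trans ((hpatT n j hcj).1).symm) (fun n => (hGd n).2.2.1)
      · exact sep_limit hd (hl2 i) (hl1 j)
          (fun n => ((hpatT n i hci).2).trans ((hpatF n j hcj).1).symm) (fun n => (hGd n).2.2.1)
      · intro he; apply hpc; rw [← hgT1 j hcj, ← he, hgT2 i hci]
    have h22 : (g i).2 ≠ (g j).2 := by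
      cases hci : c i <;> cases hcj : c j
      · exact sep_limit hd (hl2 i) (hl2 j)
          (fun n => ((hpatF n i hci).2).trans ((hpatF n j hcj).2).symm) (fun n => (hGd n).2.2.2.1)
      · intro he; apply hpc; rw [← hgF2 i hci, he, hgT2 j hcj]
      · intro he; apply hpc; rw [← hgF2 j hcj, ← he, hgT2 i hci]
      · exact sep_limit hd (hl2 i) (hl2 j)
          (fun n => ((hpatT n i hci).2).trans ((hpatT n j hcj).2).symm) (fun n => (hGd n).2.2.2.1)
    exact ⟨h11, h12, h21, h22, hunlink _ (hgmem i) _ (hgmem j)⟩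
  refine ⟨g, fun i => ⟨hgmem i, hgni i⟩, ⟨z, hgz⟩, hdisj, ?_⟩
  intro i j
  show chordIm d (g i) = chordIm d (g j)
  unfold chordIm
  rw [hgset i, hgset j]

end Sib

section Fin2

open Filter Topology

lemma lam'_closed {Λ : Set (S1 × S1)} (hcl : IsClosed Λ) :
    IsClosed {p : S1 × S1 | p ∈ Λ ∧ (p.1 = p.2 ∨ NonIsolated Λ p)} := by
  apply IsSeqClosed.isClosed
  intro x p hx hlim
  have hpΛ : p ∈ Λ := hcl.mem_of_tendsto hlim (Filter.Eventually.of_forall fun n => (hx n).1)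
  refine ⟨hpΛ, ?_⟩
  by_cases hpd : p.1 = p.2
  · exact Or.inl hpd
  right
  by_cases hf : ∃ᶠ n in atTop, (x n ≠ p ∧ x n ≠ (p.2, p.1))
  · obtain ⟨φ, hφ, hmem⟩ := Filter.extraction_of_frequently_atTop hf
    unfold NonIsolated
    exact mem_closure_of_tendsto (hlim.comp hφ.tendsto_atTop)
      (Filter.Eventually.of_forall fun n => ⟨(hx (φ n)).1, (hmem n).1, (hmem n).2⟩)
  · rw [Filter.not_frequently] at hf
    by_cases hf2 : ∃ᶠ n in atTop, x n = p
    · obtain ⟨n, hn⟩ := hf2.exists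
      have h2 := (hx n).2
      rw [hn] at h2
      rcases h2 with h | h
      · exact absurd h hpd
      · exact h
    · rw [Filter.not_frequently] at hf2
      have hev : ∀ᶠ n in atTop, x n = (p.2, p.1) := by
        filter_upwards [hf, hf2] with n h1 h2
        rcases not_and_or.mp h1 with h | h
        · exact absurd (not_not.mp h) h2
        · exact not_not.mp h
      have heq : p = (p.2, p.1) :=
        tendsto_nhds_unique hlim (tendsto_const_nhds.congr' (hev.mono fun n h => h.symm))
      exact absurd (congrArg Prod.fst heq) hpd

end Fin2

/-- The family of all non-isolated leaves of a σ_d-invariant lamination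
(together with all degenerate chords) is again a σ_d-invariant lamination; in particular,
every non-isolated leaf has a σ_d-preimage leaf that is also non-isolated. -/
theorem nonisolated_leaves_form_invariant_lamination (d : ℕ) (hd : 2 ≤ d)
    (Λ : Set (S1 × S1)) (hΛ : IsInvLam d Λ) :
    IsInvLam d {p | p ∈ Λ ∧ (p.1 = p.2 ∨ NonIsolated Λ p)} ∧
    ∀ p ∈ Λ, p.1 ≠ p.2 → NonIsolated Λ p →
      ∃ q ∈ Λ, NonIsolated Λ q ∧ ({sig d q.1, sig d q.2} : Set S1) = {p.1, p.2} := by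
  have hd1 : 1 ≤ d := le_trans (by norm_num) hd
  obtain ⟨hcl, hdiag, hunlink, hfwd, hpre, hsib⟩ := hΛ
  have hΛ' : IsInvLam d Λ := ⟨hcl, hdiag, hunlink, hfwd, hpre, hsib⟩
  constructor
  · refine ⟨lam'_closed hcl, fun x => ⟨hdiag x, Or.inl rfl⟩, ?_, ?_, ?_, ?_⟩
    · exact fun p hp q hq => hunlink p hp.1 q hq.1
    · rintro p ⟨hpΛ, hp2⟩
      refine ⟨hfwd p hpΛ, ?_⟩
      by_cases hσ : sig d p.1 = sig d p.2
      · exact Or.inl hσ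
      · right
        have hpn : NonIsolated Λ p := by
          rcases hp2 with h | h
          · exact absurd (by rw [h]) hσ
          · exact h
        exact forward_nonisolated hd1 hΛ' hpΛ hσ hpn
    · rintro p ⟨hpΛ, hp2⟩
      by_cases hpd : p.1 = p.2
      · obtain ⟨y, hy⟩ := sig_surj hd1 p.1
        refine ⟨(y, y), ⟨hdiag y, Or.inl rfl⟩, ?_⟩
        show ({sig d y, sig d y} : Set S1) = {p.1, p.2}
        rw [hy, ← hpd]
      · have hpn : NonIsolated Λ p := by
          rcases hp2 with h | h
          · exact absurd h hpd
          · exact h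
        obtain ⟨q, hqΛ, hqn, hqset⟩ := preimage_nonisolated hd1 hΛ' hpΛ hpd hpn
        exact ⟨q, ⟨hqΛ, Or.inr hqn⟩, hqset⟩
    · rintro p ⟨hpΛ, hp2⟩ hσ
      have hpn : NonIsolated Λ p := by
        rcases hp2 with h | h
        · exact absurd (by rw [h]) hσ
        · exact h
      obtain ⟨f, hf1, hf2, hf3⟩ := siblings_nonisolated hd hΛ' hpΛ hσ hpn
      exact ⟨f, fun i => ⟨(hf1 i).1, Or.inr (hf1 i).2⟩, hf2, hf3⟩
  · intro p hp hpd hpn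
    exact preimage_nonisolated hd1 hΛ' hp hpd hpn
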